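/- Define values recursively by V_M(S) piecewise linear with |V_M(S)| ≤ AS + B for all S > 0, and for 1 ≤ m ≤ M: Ṽ_{m-1}(S) = e^{-2r_mτ_m/σ_m²} ∫_0^∞ V_m(y) ρ_m(y,S) dy on (K_{m-1}^-, K_{m-1}^+), with V_{m-1}(S) = Ṽ_{m-1}(S) on (K_{m-1}^-, K_{m-1}^+) and V_{m-1}(S) = a_{m-1}^± S + b_{m-1}^± outside. Let A = max of all |a| coefficients, B = max of all |b| coefficients, R = min{r_1,...,r_M, 0}, Q = min{q_1,...,q_M, 0}. Then for all 0 ≤ m ≤ M and all S > 0, |V_m(S)| ≤ e^{Q(t_m - t_M)} A S + e^{R(t_m - t_M)} B. -/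

import Mathlib

/-!
Backward induction on `m`. Outside the continuation interval `V_{m-1}` is an affine payoff, bounded
because the exponential factors are `≥ 1` (`Q, R ≤ 0`, `t_m ≤ t_M`). Inside it, the substitution
`y = S e^x` turns `ρ_m(·, S)` into the Gaussian with mean `(r_m - q_m - σ_m²/2) Δ` and variance
`σ_m² Δ`, `Δ = t_m - t_{m-1}`; integrating the affine majorant `a y + b` of `|V_m|` against it and
discounting gives `e^{-q_m Δ} a S + e^{-r_m Δ} b`, and `Q ≤ q_m`, `R ≤ r_m` absorb these factors
into those at `t_{m-1}`.
-/

open MeasureTheory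

/-- `τ_m = σ_m² (t_m - t_{m-1}) / 2`. -/
noncomputable def tauBS (σ t : ℕ → ℝ) (m : ℕ) : ℝ := (σ m)^2 * (t m - t (m - 1)) / 2

/-- The lognormal transition density `ρ_m(y,S)` of the Black–Scholes model. -/
noncomputable def rhoBS (r q σ t : ℕ → ℝ) (m : ℕ) (y S : ℝ) : ℝ :=
  1 / (2 * Real.sqrt (Real.pi * tauBS σ t m) * y) *
    Real.exp (-(Real.log (y / S) -
      (2 / (σ m)^2) * (r m - q m - (σ m)^2 / 2) * tauBS σ t m)^2 / (4 * tauBS σ t m))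

open Real ProbabilityTheory Set

/-- The density of `S * exp X` for `X ∼ 𝒩(μ, 2τ)`. -/
noncomputable def lognormalDensity (τ μ S y : ℝ) : ℝ :=
  1 / (2 * √(π * τ) * y) * exp (-(log (y / S) - μ) ^ 2 / (4 * τ))

lemma rhoBS_eq_lognormalDensity (r q σ t : ℕ → ℝ) (m : ℕ) (y S : ℝ) :
    rhoBS r q σ t m y S = lognormalDensity (tauBS σ t m)
      ((2 / σ m ^ 2) * (r m - q m - σ m ^ 2 / 2) * tauBS σ t m) S y := rfl

lemma abs_mul_lognormalDensity_mul_exp {τ S : ℝ} (hτ : 0 < τ) (hS : 0 < S) (μ x : ℝ) :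
    |S * exp x| * lognormalDensity τ μ S (S * exp x) = gaussianPDFReal μ (2 * τ).toNNReal x := by
  have hsqrt : √(2 * π * (2 * τ)) = 2 * √(π * τ) := by
    rw [show 2 * π * (2 * τ) = 2 ^ 2 * (π * τ) by ring, sqrt_mul (by positivity),
      sqrt_sq zero_le_two]
  have hsqrt_pos : 0 < √(π * τ) := sqrt_pos.mpr (by positivity)
  rw [lognormalDensity, gaussianPDFReal, Real.coe_toNNReal _ (by positivity), hsqrt,
    mul_div_cancel_left₀ _ hS.ne', log_exp, abs_of_pos (by positivity)]
  field_simp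
  ring_nf

lemma setIntegral_Ioi_mul_lognormalDensity {τ S : ℝ} (hτ : 0 < τ) (hS : 0 < S) (μ : ℝ)
    (F : ℝ → ℝ) :
    ∫ y in Ioi 0, F y * lognormalDensity τ μ S y
      = ∫ x, F (S * exp x) ∂gaussianReal μ (2 * τ).toNNReal := by
  have himage : (fun x ↦ S * exp x) '' univ = Ioi 0 := by
    ext y
    refine ⟨fun ⟨x, _, hx⟩ ↦ hx ▸ mul_pos hS (exp_pos x), fun hy ↦ ⟨log (y / S), trivial, ?_⟩⟩
    dsimp only
    rw [exp_log (div_pos hy hS), mul_div_cancel₀ _ hS.ne']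
  have hv : (2 * τ).toNNReal ≠ 0 := by simpa using hτ
  rw [← himage, integral_image_eq_integral_abs_deriv_smul MeasurableSet.univ
      (fun x _ ↦ ((hasDerivAt_exp x).const_mul S).hasDerivWithinAt)
      (fun a _ b _ h ↦ exp_injective (mul_left_cancel₀ hS.ne' h)),
    setIntegral_univ, integral_gaussianReal_eq_integral_smul hv]
  congr 1 with x
  rw [smul_eq_mul, smul_eq_mul, ← abs_mul_lognormalDensity_mul_exp hτ hS]
  ring

lemma integral_exp_gaussianReal (μ : ℝ) (v : NNReal) :
    ∫ x, exp x ∂gaussianReal μ v = exp (μ + v / 2) := by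
  simpa [mgf] using congr_fun (mgf_id_gaussianReal (μ := μ) (v := v)) 1

lemma abs_setIntegral_mul_lognormalDensity_le {τ S : ℝ} (hτ : 0 < τ) (hS : 0 < S) (μ a b : ℝ)
    {W : ℝ → ℝ} (hW : ∀ y, 0 < y → |W y| ≤ a * y + b) :
    |∫ y in Ioi 0, W y * lognormalDensity τ μ S y| ≤ a * S * exp (μ + τ) + b := by
  set γ := gaussianReal μ (2 * τ).toNNReal
  have hexp : Integrable (fun x ↦ exp x) γ := by
    simpa using integrable_exp_mul_gaussianReal (μ := μ) (v := (2 * τ).toNNReal) 1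
  have hmajor : Integrable (fun x ↦ a * S * exp x + b) γ :=
    (hexp.const_mul _).add (integrable_const b)
  rw [setIntegral_Ioi_mul_lognormalDensity hτ hS]
  calc |∫ x, W (S * exp x) ∂γ| ≤ ∫ x, (a * S * exp x + b) ∂γ :=
        norm_integral_le_of_norm_le hmajor <| ae_of_all _ fun x ↦ by
          rw [Real.norm_eq_abs, mul_assoc]
          exact hW _ (by positivity)
    _ = a * S * exp (μ + τ) + b := by
        rw [integral_add (hexp.const_mul _) (integrable_const b), integral_const_mul,
          integral_exp_gaussianReal, Real.coe_toNNReal _ (by positivity)]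
        simp

lemma two_mul_tauBS_div_sq {σ : ℕ → ℝ} (t : ℕ → ℝ) {m : ℕ} (hσ : σ m ≠ 0) :
    2 * tauBS σ t m / σ m ^ 2 = t m - t (m - 1) := by
  rw [tauBS]
  field_simp

lemma abs_discounted_integral_rhoBS_le (r q : ℕ → ℝ) {σ t : ℕ → ℝ} {m : ℕ} (hσ : 0 < σ m)
    (ht : t (m - 1) < t m) {W : ℝ → ℝ} {a b : ℝ} (hW : ∀ y, 0 < y → |W y| ≤ a * y + b)
    {S : ℝ} (hS : 0 < S) :
    |exp (-2 * r m * tauBS σ t m / σ m ^ 2) * ∫ y in Ioi 0, W y * rhoBS r q σ t m y S|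
      ≤ exp (-q m * (t m - t (m - 1))) * a * S + exp (-r m * (t m - t (m - 1))) * b := by
  set τ := tauBS σ t m
  have hτ : 0 < τ := by
    have := sub_pos.mpr ht
    simp only [τ, tauBS]
    positivity
  have hdiscount : -2 * r m * τ / σ m ^ 2 = -r m * (t m - t (m - 1)) := by
    rw [← two_mul_tauBS_div_sq t hσ.ne']
    ring
  have hdrift : (2 / σ m ^ 2) * (r m - q m - σ m ^ 2 / 2) * τ + τ
      = (r m - q m) * (t m - t (m - 1)) := by
    rw [← two_mul_tauBS_div_sq t hσ.ne']
    field_simp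
    ring
  simp_rw [rhoBS_eq_lognormalDensity]
  rw [abs_mul, abs_of_pos (exp_pos _)]
  calc _ ≤ exp (-2 * r m * τ / σ m ^ 2)
          * (a * S * exp ((2 / σ m ^ 2) * (r m - q m - σ m ^ 2 / 2) * τ + τ) + b) :=
        mul_le_mul_of_nonneg_left (abs_setIntegral_mul_lognormalDensity_le hτ hS _ a b hW)
          (exp_pos _).le
    _ = _ := by
        rw [hdiscount, hdrift, show -q m * (t m - t (m - 1))
          = -r m * (t m - t (m - 1)) + (r m - q m) * (t m - t (m - 1)) by ring, exp_add]
        ring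

lemma exp_neg_mul_mul_exp_mul_le {Q q s s' u : ℝ} (hQ : Q ≤ q) (hs : s' ≤ s) :
    exp (-q * (s - s')) * exp (Q * (s - u)) ≤ exp (Q * (s' - u)) := by
  rw [← exp_add, exp_le_exp]
  nlinarith [mul_le_mul_of_nonneg_right hQ (sub_nonneg.mpr hs)]

lemma abs_mul_add_le_of_one_le {a b A B c d S : ℝ} (hS : 0 < S) (ha : |a| ≤ A) (hb : |b| ≤ B)
    (hc : 1 ≤ c) (hd : 1 ≤ d) : |a * S + b| ≤ c * A * S + d * B := by
  have hAS : 0 ≤ A * S := mul_nonneg ((abs_nonneg a).trans ha) hS.le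
  have hB : 0 ≤ B := (abs_nonneg b).trans hb
  calc |a * S + b| ≤ |a| * S + |b| := by
        simpa only [abs_mul, abs_of_pos hS] using abs_add_le (a * S) b
    _ ≤ A * S + B := by gcongr
    _ ≤ c * A * S + d * B := by nlinarith

theorem stmt5_general (M : ℕ) (t r q σ : ℕ → ℝ)
    (hσ : ∀ m, 0 < σ m) (ht : ∀ m, 1 ≤ m → m ≤ M → t (m - 1) < t m)
    (Km Kp : ℕ → EReal)
    (aP aN bP bN : ℕ → ℝ) (aM bM A B R Q : ℝ)
    (haP : ∀ m, m ≤ M → |aP m| ≤ A) (haN : ∀ m, m ≤ M → |aN m| ≤ A) (haM : |aM| ≤ A)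
    (hbP : ∀ m, m ≤ M → |bP m| ≤ B) (hbN : ∀ m, m ≤ M → |bN m| ≤ B) (hbM : |bM| ≤ B)
    (hR : ∀ m, 1 ≤ m → m ≤ M → R ≤ r m) (hR0 : R ≤ 0)
    (hQ : ∀ m, 1 ≤ m → m ≤ M → Q ≤ q m) (hQ0 : Q ≤ 0)
    (V : ℕ → ℝ → ℝ)
    (hVM : ∀ S : ℝ, 0 < S → |V M S| ≤ A * S + B)
    (hrec : ∀ m, 1 ≤ m → m ≤ M → ∀ S : ℝ, 0 < S →
      Km (m - 1) < (S : EReal) → (S : EReal) < Kp (m - 1) →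
      V (m - 1) S = Real.exp (-2 * r m * tauBS σ t m / (σ m)^2) *
        ∫ y in Set.Ioi (0:ℝ), V m y * rhoBS r q σ t m y S)
    (hlo : ∀ m, 1 ≤ m → m ≤ M → ∀ S : ℝ, 0 < S → (S : EReal) ≤ Km (m - 1) →
      V (m - 1) S = aN (m - 1) * S + bN (m - 1))
    (hhi : ∀ m, 1 ≤ m → m ≤ M → ∀ S : ℝ, 0 < S → Kp (m - 1) ≤ (S : EReal) →
      V (m - 1) S = aP (m - 1) * S + bP (m - 1)) :
    ∀ m, m ≤ M → ∀ S : ℝ, 0 < S →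
      |V m S| ≤ Real.exp (Q * (t m - t M)) * A * S + Real.exp (R * (t m - t M)) * B := by
  have hA : 0 ≤ A := (abs_nonneg aM).trans haM
  have hB : 0 ≤ B := (abs_nonneg bM).trans hbM
  have ht_le : ∀ k ≤ M, t k ≤ t M := fun k hk ↦
    Nat.decreasingInduction (fun j hj ih ↦ (ht (j + 1) j.succ_pos hj).le.trans ih) le_rfl hk
  have hpayoff : ∀ k ≤ M, ∀ a b, |a| ≤ A → |b| ≤ B → ∀ S : ℝ, 0 < S →
      |a * S + b| ≤ exp (Q * (t k - t M)) * A * S + exp (R * (t k - t M)) * B :=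
    fun k hk a b ha hb S hS ↦ abs_mul_add_le_of_one_le hS ha hb
      (one_le_exp_iff.mpr (mul_nonneg_of_nonpos_of_nonpos hQ0 (sub_nonpos.mpr (ht_le k hk))))
      (one_le_exp_iff.mpr (mul_nonneg_of_nonpos_of_nonpos hR0 (sub_nonpos.mpr (ht_le k hk))))
  intro m hm
  induction hm using Nat.decreasingInduction with
  | self => simpa using hVM
  | of_succ k hk ih =>
    intro S hS
    rcases le_or_gt (S : EReal) (Km k) with hlow | hlow
    · exact (congrArg abs (hlo (k + 1) k.succ_pos hk S hS hlow)).trans_le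
        (hpayoff k hk.le _ _ (haN k hk.le) (hbN k hk.le) S hS)
    rcases le_or_gt (Kp k) (S : EReal) with hhigh | hhigh
    · exact (congrArg abs (hhi (k + 1) k.succ_pos hk S hS hhigh)).trans_le
        (hpayoff k hk.le _ _ (haP k hk.le) (hbP k hk.le) S hS)
    have htk : t k ≤ t (k + 1) := (ht (k + 1) k.succ_pos hk).le
    calc |V k S| = _ := congrArg abs (hrec (k + 1) k.succ_pos hk S hS hlow hhigh)
      _ ≤ exp (-q (k + 1) * (t (k + 1) - t k)) * (exp (Q * (t (k + 1) - t M)) * A) * S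
            + exp (-r (k + 1) * (t (k + 1) - t k)) * (exp (R * (t (k + 1) - t M)) * B) :=
          abs_discounted_integral_rhoBS_le r q (hσ _) (ht _ k.succ_pos hk) ih hS
      _ ≤ _ := by
          rw [← mul_assoc, ← mul_assoc]
          gcongr
          · exact exp_neg_mul_mul_exp_mul_le (hQ _ k.succ_pos hk) htk
          · exact exp_neg_mul_mul_exp_mul_le (hR _ k.succ_pos hk) htk

/-- A priori bound on the recursively defined option values:
`|V_m(S)| ≤ e^{Q(t_m - t_M)} A S + e^{R(t_m - t_M)} B` for all `0 ≤ m ≤ M`, `S > 0`. -/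
theorem stmt5 (M : ℕ) (hM : 1 ≤ M) (t r q σ : ℕ → ℝ)
    (hσ : ∀ m, 0 < σ m) (ht : ∀ m, 1 ≤ m → m ≤ M → t (m - 1) < t m)
    (Km Kp : ℕ → EReal) (hKm0 : Km 0 = 0) (hKp0 : Kp 0 = ⊤)
    (hKmnn : ∀ m, (0 : EReal) ≤ Km m) (hKK : ∀ m, Km m ≤ Kp m)
    (aP aN bP bN : ℕ → ℝ) (aM bM A B R Q : ℝ)
    (haP : ∀ m, m ≤ M → |aP m| ≤ A) (haN : ∀ m, m ≤ M → |aN m| ≤ A) (haM : |aM| ≤ A)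
    (hbP : ∀ m, m ≤ M → |bP m| ≤ B) (hbN : ∀ m, m ≤ M → |bN m| ≤ B) (hbM : |bM| ≤ B)
    (hR : ∀ m, 1 ≤ m → m ≤ M → R ≤ r m) (hR0 : R ≤ 0)
    (hQ : ∀ m, 1 ≤ m → m ≤ M → Q ≤ q m) (hQ0 : Q ≤ 0)
    (V : ℕ → ℝ → ℝ)
    (hVM : ∀ S : ℝ, 0 < S → |V M S| ≤ A * S + B)
    (hrec : ∀ m, 1 ≤ m → m ≤ M → ∀ S : ℝ, 0 < S →
      Km (m - 1) < (S : EReal) → (S : EReal) < Kp (m - 1) →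
      V (m - 1) S = Real.exp (-2 * r m * tauBS σ t m / (σ m)^2) *
        ∫ y in Set.Ioi (0:ℝ), V m y * rhoBS r q σ t m y S)
    (hlo : ∀ m, 1 ≤ m → m ≤ M → ∀ S : ℝ, 0 < S → (S : EReal) ≤ Km (m - 1) →
      V (m - 1) S = aN (m - 1) * S + bN (m - 1))
    (hhi : ∀ m, 1 ≤ m → m ≤ M → ∀ S : ℝ, 0 < S → Kp (m - 1) ≤ (S : EReal) →
      V (m - 1) S = aP (m - 1) * S + bP (m - 1)) :
    ∀ m, m ≤ M → ∀ S : ℝ, 0 < S →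
      |V m S| ≤ Real.exp (Q * (t m - t M)) * A * S + Real.exp (R * (t m - t M)) * B :=
  stmt5_general M t r q σ hσ ht Km Kp aP aN bP bN aM bM A B R Q haP haN haM hbP hbN hbM hR hR0 hQ
    hQ0 V hVM hrec hlo hhi
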